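/- If f is continuously differentiable on [0,1] with f' of bounded variation, then the Wiener integral I(f) = ∫₀¹ f(s) dW_s satisfies I(f) − E[I(f) | W_{1/n},…,W_1] = − ∫₀¹ f'(s)(W_s − W^lin_s) ds almost surely, where W^lin is the piecewise linear interpolation of W on the grid {k/n}. -/

import Mathlib

open MeasureTheory

/-- Piecewise linear interpolation of a process `W` on the grid `{k/n}`. -/
noncomputable def Wlin {Ω : Type*} (W : ℝ → Ω → ℝ) (n : ℕ) (t : ℝ) (ω : Ω) : ℝ :=
  W ((⌊(n:ℝ)*t⌋ : ℝ) / n) ω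
    + n * (t - (⌊(n:ℝ)*t⌋ : ℝ)/n)
      * (W (((⌊(n:ℝ)*t⌋ : ℝ)+1)/n) ω - W ((⌊(n:ℝ)*t⌋ : ℝ)/n) ω)

open Function in
lemma prodInt_aux {Ω : Type*} [MeasurableSpace Ω] (μA : Measure Ω) [IsFiniteMeasure μA]
    (H : ℝ → Ω → ℝ) (hH : Measurable (Function.uncurry H)) (B : ℝ)
    (hint : ∀ s ∈ Set.Ioo (0:ℝ) 1, Integrable (H s) μA)
    (hbd : ∀ s ∈ Set.Ioo (0:ℝ) 1, ∫ ω, ‖H s ω‖ ∂μA ≤ B) :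
    Integrable (Function.uncurry H)
      ((MeasureTheory.volume.restrict (Set.Ioo (0:ℝ) 1)).prod μA) := by
  have hsm : AEStronglyMeasurable (Function.uncurry H)
      ((MeasureTheory.volume.restrict (Set.Ioo (0:ℝ) 1)).prod μA) :=
    hH.aestronglyMeasurable
  rw [integrable_prod_iff hsm]
  constructor
  · filter_upwards [ae_restrict_mem measurableSet_Ioo] with s hs
    exact hint s hs
  · apply Integrable.mono' (integrable_const B)
    · exact hsm.norm.integral_prod_right'
    · filter_upwards [ae_restrict_mem measurableSet_Ioo] with s hs
      rw [Real.norm_eq_abs, abs_of_nonneg (integral_nonneg fun ω => norm_nonneg _)]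
      exact hbd s hs

lemma swapInt_aux {Ω : Type*} [MeasurableSpace Ω] (μA : Measure Ω) [IsFiniteMeasure μA]
    (H : ℝ → Ω → ℝ) (hH : Measurable (Function.uncurry H)) (B : ℝ)
    (hint : ∀ s ∈ Set.Ioo (0:ℝ) 1, Integrable (H s) μA)
    (hbd : ∀ s ∈ Set.Ioo (0:ℝ) 1, ∫ ω, ‖H s ω‖ ∂μA ≤ B) :
    ∫ s in Set.Ioo (0:ℝ) 1, ∫ ω, H s ω ∂μA
      = ∫ ω, (∫ s in Set.Ioo (0:ℝ) 1, H s ω) ∂μA :=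
  integral_integral_swap (prodInt_aux μA H hH B hint hbd)


/-- Value of the grid observation vector, with `gridF n v k = v (k-1)` for `1 ≤ k ≤ n`,
and `0` otherwise (in particular at `k = 0`, matching `W 0 = 0` a.s.). -/
noncomputable def gridF (n : ℕ) (v : Fin n → ℝ) (k : ℕ) : ℝ :=
  if h : 1 ≤ k ∧ k ≤ n then v ⟨k-1, by omega⟩ else 0

/-- Piecewise linear interpolation built from a vector of grid values. -/
noncomputable def linF (n : ℕ) (v : Fin n → ℝ) (s : ℝ) : ℝ :=
  gridF n v (⌊(n:ℝ)*s⌋).toNat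
    + ((n:ℝ)*s - ((⌊(n:ℝ)*s⌋ : ℤ):ℝ))
      * (gridF n v ((⌊(n:ℝ)*s⌋).toNat + 1) - gridF n v (⌊(n:ℝ)*s⌋).toNat)

noncomputable def hF (g : ℝ → ℝ) (n : ℕ) (v : Fin n → ℝ) : ℝ :=
  ∫ s in Set.Ioo (0:ℝ) 1, g s * linF n v s

lemma gridF_measurable (n k : ℕ) : Measurable fun v : Fin n → ℝ => gridF n v k := by
  unfold gridF
  split
  · exact measurable_pi_apply _
  · exact measurable_const

lemma linF_measurable (n : ℕ) :
    Measurable (fun p : (Fin n → ℝ) × ℝ => linF n p.1 p.2) := by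
  have hfloorR : Measurable fun s : ℝ => ((⌊(n:ℝ)*s⌋ : ℤ) : ℝ) :=
    (measurable_of_countable (fun z : ℤ => (z:ℝ))).comp
      (Int.measurable_floor.comp (measurable_id.const_mul _))
  have hfl : Measurable fun s : ℝ => (⌊(n:ℝ)*s⌋).toNat :=
    (measurable_of_countable (fun z : ℤ => z.toNat)).comp
      (Int.measurable_floor.comp (measurable_id.const_mul _))
  have hg2 : Measurable fun q : (Fin n → ℝ) × ℕ => gridF n q.1 q.2 :=
    measurable_from_prod_countable_left (fun k => gridF_measurable n k)
  have hm1 : Measurable fun p : (Fin n → ℝ) × ℝ => gridF n p.1 ((⌊(n:ℝ)*p.2⌋).toNat) :=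
    hg2.comp (measurable_fst.prodMk (hfl.comp measurable_snd))
  have hm2 : Measurable fun p : (Fin n → ℝ) × ℝ => gridF n p.1 ((⌊(n:ℝ)*p.2⌋).toNat + 1) :=
    hg2.comp (measurable_fst.prodMk ((hfl.comp measurable_snd).add_const 1))
  have hm3 : Measurable fun p : (Fin n → ℝ) × ℝ => (n:ℝ)*p.2 - ((⌊(n:ℝ)*p.2⌋ : ℤ):ℝ) :=
    ((measurable_id.const_mul _).sub hfloorR).comp measurable_snd
  exact hm1.add (hm3.mul (hm2.sub hm1))

lemma hF_measurable (g : ℝ → ℝ) (n : ℕ) (hg : Measurable g) : Measurable (hF g n) := by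
  have h1 : StronglyMeasurable (fun p : (Fin n → ℝ) × ℝ => g p.2 * linF n p.1 p.2) :=
    ((hg.comp measurable_snd).mul (linF_measurable n)).stronglyMeasurable
  exact h1.integral_prod_right'.measurable

/-- For `f ∈ C¹([0,1])` with `f'` of bounded variation, the Wiener integral
`I(f) = ∫₀¹ f dW = f(1)W₁ − ∫₀¹ f'(s)W_s ds` satisfies
`I(f) − E[I(f) | W_{1/n},…,W_1] = −∫₀¹ f'(s)(W_s − W^lin_s) ds` a.s.,
where `G` is the σ-algebra generated by the grid observations and
`E[W_t | G] = W^lin_t` (`W` a standard Brownian motion). -/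
theorem wiener_integral_minus_condexp
    {Ω : Type*} [m0 : MeasurableSpace Ω] (μ : Measure Ω) [IsProbabilityMeasure μ]
    (W : ℝ → Ω → ℝ) (n : ℕ) (hn : 1 ≤ n)
    (hmeas : Measurable (Function.uncurry W))
    (hcont : ∀ ω, Continuous fun t => W t ω)
    (hL2 : ∀ t ∈ Set.Icc (0:ℝ) 1, MemLp (W t) 2 μ)
    (hcov : ∀ s ∈ Set.Icc (0:ℝ) 1, ∀ t ∈ Set.Icc (0:ℝ) 1,
      ∫ ω, W s ω * W t ω ∂μ = min s t)
    (G : MeasurableSpace Ω)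
    (hGdef : G = MeasurableSpace.comap
      (fun ω => fun k : Fin n => W (((k:ℕ)+1:ℝ)/n) ω) inferInstance)
    (hG : G ≤ m0)
    (hcond : ∀ t ∈ Set.Icc (0:ℝ) 1, μ[W t | G] =ᵐ[μ] Wlin W n t)
    (f f' : ℝ → ℝ)
    (hf : ∀ x ∈ Set.Icc (0:ℝ) 1, HasDerivAt f (f' x) x)
    (hf' : BoundedVariationOn f' (Set.Icc 0 1)) :
    (fun ω => (f 1 * W 1 ω - ∫ s in (0:ℝ)..1, f' s * W s ω)
        - (μ[fun ω' => f 1 * W 1 ω' - ∫ s in (0:ℝ)..1, f' s * W s ω' | G]) ω)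
      =ᵐ[μ] fun ω => -∫ s in (0:ℝ)..1, f' s * (W s ω - Wlin W n s ω) := by
  classical
  letI _inst : MeasurableSpace Ω := m0
  haveI : SigmaFinite (μ.trim hG) := inferInstance
  have hn0 : (n:ℝ) ≠ 0 := Nat.cast_ne_zero.mpr (by omega)
  have hnpos : (0:ℝ) < n := by positivity
  -- derivative identification
  have hderiv : ∀ s ∈ Set.Icc (0:ℝ) 1, deriv f s = f' s := fun s hs => (hf s hs).deriv
  -- bound on f'
  set C : ℝ := |f' 0| + (eVariationOn f' (Set.Icc 0 1)).toReal with hCdef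
  have hC0 : 0 ≤ C := by positivity
  have hC : ∀ s ∈ Set.Icc (0:ℝ) 1, |deriv f s| ≤ C := by
    intro s hs
    rw [hderiv s hs]
    have h1 : dist (f' s) (f' 0) ≤ (eVariationOn f' (Set.Icc 0 1)).toReal :=
      hf'.dist_le hs (Set.left_mem_Icc.mpr zero_le_one)
    rw [Real.dist_eq] at h1
    calc |f' s| ≤ |f' s - f' 0| + |f' 0| := by
          have := abs_add_le (f' s - f' 0) (f' 0); simpa using this
      _ ≤ C := by rw [hCdef]; linarith
  -- integrability of W t
  have hWint : ∀ t ∈ Set.Icc (0:ℝ) 1, Integrable (W t) μ :=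
    fun t ht => (hL2 t ht).integrable one_le_two
  have hWsq : ∀ t ∈ Set.Icc (0:ℝ) 1, Integrable (fun ω => W t ω * W t ω) μ := by
    intro t ht
    have := (hL2 t ht).integrable_sq
    simpa [pow_two] using this
  -- abs integral bound
  have habs : ∀ (A : Set Ω), ∀ t ∈ Set.Icc (0:ℝ) 1, ∫ ω in A, |W t ω| ∂μ ≤ 2 := by
    intro A t ht
    have h1 : ∫ ω in A, |W t ω| ∂μ ≤ ∫ ω, |W t ω| ∂μ := by
      exact setIntegral_le_integral (μ := μ) (hWint t ht).abs
        (Filter.Eventually.of_forall fun ω => abs_nonneg _)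
    have h2 : ∫ ω, |W t ω| ∂μ ≤ ∫ ω, (1 + W t ω * W t ω) ∂μ := by
      apply integral_mono (hWint t ht).abs ((integrable_const 1).add (hWsq t ht))
      intro ω
      show |W t ω| ≤ 1 + W t ω * W t ω
      have := sq_nonneg (|W t ω| - 1)
      have h3 : |W t ω| * |W t ω| = W t ω * W t ω := abs_mul_abs_self _
      nlinarith [abs_nonneg (W t ω)]
    have h3 : ∫ ω, (1 + W t ω * W t ω) ∂μ = 1 + t := by
      rw [integral_add (integrable_const 1) (hWsq t ht), integral_const,
        hcov t ht t ht, min_self]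
      simp
    linarith [ht.2]
  -- floor facts
  have hfract_eq : ∀ s : ℝ, (n:ℝ) * (s - (⌊(n:ℝ)*s⌋:ℝ)/n) = (n:ℝ)*s - (⌊(n:ℝ)*s⌋:ℝ) := by
    intro s
    rw [mul_sub, mul_div_cancel₀ _ hn0]
  have hfract0 : ∀ s : ℝ, 0 ≤ (n:ℝ)*s - (⌊(n:ℝ)*s⌋:ℝ) := by
    intro s; have := Int.floor_le ((n:ℝ)*s); linarith
  have hfract1 : ∀ s : ℝ, (n:ℝ)*s - (⌊(n:ℝ)*s⌋:ℝ) ≤ 1 := by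
    intro s; have := Int.lt_floor_add_one ((n:ℝ)*s); linarith
  have hmem : ∀ s ∈ Set.Ioo (0:ℝ) 1,
      ((⌊(n:ℝ)*s⌋:ℝ))/n ∈ Set.Icc (0:ℝ) 1 ∧ ((⌊(n:ℝ)*s⌋:ℝ)+1)/n ∈ Set.Icc (0:ℝ) 1 := by
    intro s hs
    have h0 : (0:ℤ) ≤ ⌊(n:ℝ)*s⌋ := Int.floor_nonneg.mpr (by nlinarith [hs.1])
    have h1 : ⌊(n:ℝ)*s⌋ < (n:ℤ) := by
      rw [Int.floor_lt]
      push_cast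
      nlinarith [hs.2]
    have h0' : (0:ℝ) ≤ (⌊(n:ℝ)*s⌋:ℝ) := by exact_mod_cast h0
    have h1' : (⌊(n:ℝ)*s⌋:ℝ) + 1 ≤ (n:ℝ) := by exact_mod_cast h1
    constructor
    · exact ⟨by positivity, by rw [div_le_one hnpos]; linarith⟩
    · exact ⟨by positivity, by rw [div_le_one hnpos]; linarith⟩
  -- integrability of Wlin
  have hWlin_int : ∀ s ∈ Set.Ioo (0:ℝ) 1, Integrable (Wlin W n s) μ := by
    intro s hs
    obtain ⟨ha, hb⟩ := hmem s hs
    exact ((hWint _ ha).add (((hWint _ hb).sub (hWint _ ha)).const_mul _))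
  -- abs bound for Wlin
  have hWlin_abs : ∀ (A : Set Ω), ∀ s ∈ Set.Ioo (0:ℝ) 1,
      ∫ ω in A, |Wlin W n s ω| ∂μ ≤ 6 := by
    intro A s hs
    obtain ⟨ha, hb⟩ := hmem s hs
    have hc0 : 0 ≤ (n:ℝ) * (s - (⌊(n:ℝ)*s⌋:ℝ)/n) := by rw [hfract_eq]; exact hfract0 s
    have hc1 : (n:ℝ) * (s - (⌊(n:ℝ)*s⌋:ℝ)/n) ≤ 1 := by rw [hfract_eq]; exact hfract1 s
    have hpt : ∀ ω, |Wlin W n s ω|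
        ≤ |W ((⌊(n:ℝ)*s⌋:ℝ)/n) ω| + (|W (((⌊(n:ℝ)*s⌋:ℝ)+1)/n) ω| + |W ((⌊(n:ℝ)*s⌋:ℝ)/n) ω|) := by
      intro ω
      unfold Wlin
      set x := W ((⌊(n:ℝ)*s⌋:ℝ)/n) ω
      set y := W (((⌊(n:ℝ)*s⌋:ℝ)+1)/n) ω
      set c := (n:ℝ) * (s - (⌊(n:ℝ)*s⌋:ℝ)/n)
      have h1 : |x + c * (y - x)| ≤ |x| + |c * (y - x)| := abs_add_le _ _
      have h2 : |c * (y - x)| ≤ |y - x| := by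
        rw [abs_mul, abs_of_nonneg hc0]
        exact mul_le_of_le_one_left (abs_nonneg _) hc1
      have h3 : |y - x| ≤ |y| + |x| := abs_sub _ _
      linarith
    have hi1 : Integrable (fun ω => |Wlin W n s ω|) (μ.restrict A) :=
      ((hWlin_int s hs).restrict).abs
    have hia : Integrable (fun ω => |W ((⌊(n:ℝ)*s⌋:ℝ)/n) ω|) (μ.restrict A) :=
      ((hWint _ ha).restrict).abs
    have hib : Integrable (fun ω => |W (((⌊(n:ℝ)*s⌋:ℝ)+1)/n) ω|) (μ.restrict A) :=
      ((hWint _ hb).restrict).abs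
    have hiba : Integrable (fun ω => |W (((⌊(n:ℝ)*s⌋:ℝ)+1)/n) ω| + |W ((⌊(n:ℝ)*s⌋:ℝ)/n) ω|)
        (μ.restrict A) := hib.add hia
    have hi2 : Integrable (fun ω => |W ((⌊(n:ℝ)*s⌋:ℝ)/n) ω|
        + (|W (((⌊(n:ℝ)*s⌋:ℝ)+1)/n) ω| + |W ((⌊(n:ℝ)*s⌋:ℝ)/n) ω|)) (μ.restrict A) :=
      hia.add hiba
    calc ∫ ω in A, |Wlin W n s ω| ∂μ
        ≤ ∫ ω in A, (|W ((⌊(n:ℝ)*s⌋:ℝ)/n) ω|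
            + (|W (((⌊(n:ℝ)*s⌋:ℝ)+1)/n) ω| + |W ((⌊(n:ℝ)*s⌋:ℝ)/n) ω|)) ∂μ :=
          integral_mono hi1 hi2 hpt
      _ = (∫ ω in A, |W ((⌊(n:ℝ)*s⌋:ℝ)/n) ω| ∂μ)
            + ((∫ ω in A, |W (((⌊(n:ℝ)*s⌋:ℝ)+1)/n) ω| ∂μ)
              + ∫ ω in A, |W ((⌊(n:ℝ)*s⌋:ℝ)/n) ω| ∂μ) := by
          rw [integral_add hia hiba, integral_add hib hia]
      _ ≤ 2 + (2 + 2) := by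
          have := habs A _ ha
          have := habs A _ hb
          gcongr <;> assumption
      _ = 6 := by norm_num
  -- measurability
  have hWcomp : ∀ (a : ℝ → ℝ), Measurable a → Measurable (fun p : ℝ × Ω => W (a p.1) p.2) :=
    fun a ha => hmeas.comp ((ha.comp measurable_fst).prodMk measurable_snd)
  have hfloorR : Measurable fun s : ℝ => ((⌊(n:ℝ)*s⌋ : ℤ) : ℝ) :=
    (measurable_of_countable (fun z : ℤ => (z:ℝ))).comp
      (Int.measurable_floor.comp (measurable_id.const_mul _))
  have hWslice : ∀ ω, Measurable fun s : ℝ => W s ω :=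
    fun ω => hmeas.comp (measurable_id.prodMk measurable_const)
  have hWlinMeas : Measurable fun p : ℝ × Ω => Wlin W n p.1 p.2 := by
    unfold Wlin
    exact (hWcomp _ (hfloorR.div_const _)).add
      ((((measurable_fst.sub ((hfloorR.div_const _).comp measurable_fst)).const_mul _)).mul
        ((hWcomp _ ((hfloorR.add_const 1).div_const _)).sub (hWcomp _ (hfloorR.div_const _))))
  have hH1meas : Measurable (Function.uncurry fun s ω => deriv f s * W s ω) :=
    ((measurable_deriv f).comp measurable_fst).mul hmeas
  have hH2meas : Measurable (Function.uncurry fun s ω => deriv f s * Wlin W n s ω) :=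
    ((measurable_deriv f).comp measurable_fst).mul hWlinMeas
  -- product integrability
  have hIoosub : Set.Ioo (0:ℝ) 1 ⊆ Set.Icc (0:ℝ) 1 := Set.Ioo_subset_Icc_self
  have hprodW : ∀ A : Set Ω, Integrable (Function.uncurry fun s ω => deriv f s * W s ω)
      ((MeasureTheory.volume.restrict (Set.Ioo (0:ℝ) 1)).prod (μ.restrict A)) := by
    intro A
    apply prodInt_aux _ _ hH1meas (C * 2)
    · exact fun s hs => ((hWint s (hIoosub hs)).restrict.const_mul _)
    · intro s hs
      have : ∫ ω, ‖deriv f s * W s ω‖ ∂(μ.restrict A) = |deriv f s| * ∫ ω in A, |W s ω| ∂μ := by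
        simp only [norm_mul, Real.norm_eq_abs]
        exact integral_const_mul _ _
      rw [this]
      exact mul_le_mul (hC s (hIoosub hs)) (habs A s (hIoosub hs))
        (integral_nonneg fun ω => abs_nonneg _) hC0
  have hprodWlin : ∀ A : Set Ω, Integrable (Function.uncurry fun s ω => deriv f s * Wlin W n s ω)
      ((MeasureTheory.volume.restrict (Set.Ioo (0:ℝ) 1)).prod (μ.restrict A)) := by
    intro A
    apply prodInt_aux _ _ hH2meas (C * 6)
    · exact fun s hs => ((hWlin_int s hs).restrict.const_mul _)
    · intro s hs
      have : ∫ ω, ‖deriv f s * Wlin W n s ω‖ ∂(μ.restrict A)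
          = |deriv f s| * ∫ ω in A, |Wlin W n s ω| ∂μ := by
        simp only [norm_mul, Real.norm_eq_abs]
        exact integral_const_mul _ _
      rw [this]
      exact mul_le_mul (hC s (hIoosub hs)) (hWlin_abs A s hs)
        (integral_nonneg fun ω => abs_nonneg _) hC0
  -- Fubini swaps
  have hswapW : ∀ A : Set Ω,
      ∫ s in Set.Ioo (0:ℝ) 1, ∫ ω in A, deriv f s * W s ω ∂μ
        = ∫ ω in A, (∫ s in Set.Ioo (0:ℝ) 1, deriv f s * W s ω) ∂μ :=
    fun A => integral_integral_swap (hprodW A)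
  have hswapWlin : ∀ A : Set Ω,
      ∫ s in Set.Ioo (0:ℝ) 1, ∫ ω in A, deriv f s * Wlin W n s ω ∂μ
        = ∫ ω in A, (∫ s in Set.Ioo (0:ℝ) 1, deriv f s * Wlin W n s ω) ∂μ :=
    fun A => integral_integral_swap (hprodWlin A)
  -- rewriting interval integrals
  have hYdef : ∀ ω, (∫ s in (0:ℝ)..1, f' s * W s ω)
      = ∫ s in Set.Ioo (0:ℝ) 1, deriv f s * W s ω := by
    intro ω
    rw [intervalIntegral.integral_of_le zero_le_one, integral_Ioc_eq_integral_Ioo]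
    exact setIntegral_congr_fun measurableSet_Ioo fun s hs => by
      rw [hderiv s (hIoosub hs)]
  have hgYdef : ∀ ω, (∫ s in (0:ℝ)..1, f' s * Wlin W n s ω)
      = ∫ s in Set.Ioo (0:ℝ) 1, deriv f s * Wlin W n s ω := by
    intro ω
    rw [intervalIntegral.integral_of_le zero_le_one, integral_Ioc_eq_integral_Ioo]
    exact setIntegral_congr_fun measurableSet_Ioo fun s hs => by
      rw [hderiv s (hIoosub hs)]
  -- integrability of the integrated processes
  have hYint : Integrable (fun ω => ∫ s in Set.Ioo (0:ℝ) 1, deriv f s * W s ω) μ := by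
    have := (hprodW Set.univ).integral_prod_right
    simpa [Measure.restrict_univ, Function.uncurry] using this
  have hgYint : Integrable (fun ω => ∫ s in Set.Ioo (0:ℝ) 1, deriv f s * Wlin W n s ω) μ := by
    have := (hprodWlin Set.univ).integral_prod_right
    simpa [Measure.restrict_univ, Function.uncurry] using this
  -- W 0 = 0 a.s.
  have h0m : (0:ℝ) ∈ Set.Icc (0:ℝ) 1 := ⟨le_refl _, zero_le_one⟩
  have hW0 : ∀ᵐ ω ∂μ, W 0 ω = 0 := by
    have hzero : ∫ ω, W 0 ω * W 0 ω ∂μ = 0 := by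
      rw [hcov 0 h0m 0 h0m]; simp
    have h5 := (integral_eq_zero_iff_of_nonneg (fun ω => mul_self_nonneg (W 0 ω))
      (hWsq 0 h0m)).mp hzero
    filter_upwards [h5] with ω hω
    exact mul_self_eq_zero.mp hω
  -- Wlin agrees a.e. with linF of the grid vector
  have hVgrid : ∀ᵐ ω ∂μ, ∀ s ∈ Set.Ioo (0:ℝ) 1,
      Wlin W n s ω = linF n (fun k : Fin n => W (((k:ℕ)+1:ℝ)/n) ω) s := by
    filter_upwards [hW0] with ω hω
    intro s hs
    have h0 : (0:ℤ) ≤ ⌊(n:ℝ)*s⌋ := Int.floor_nonneg.mpr (by nlinarith [hs.1])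
    have h1 : ⌊(n:ℝ)*s⌋ < (n:ℤ) := by
      rw [Int.floor_lt]; push_cast; nlinarith [hs.2]
    have hcast : (((⌊(n:ℝ)*s⌋).toNat : ℤ)) = ⌊(n:ℝ)*s⌋ := Int.toNat_of_nonneg h0
    have hcastR : (((⌊(n:ℝ)*s⌋).toNat : ℝ)) = ((⌊(n:ℝ)*s⌋ : ℤ):ℝ) := by
      exact_mod_cast congrArg (Int.cast : ℤ → ℝ) hcast
    have hmn : (⌊(n:ℝ)*s⌋).toNat < n := by omega
    have e1 : gridF n (fun k : Fin n => W (((k:ℕ)+1:ℝ)/n) ω) (⌊(n:ℝ)*s⌋).toNat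
        = W (((((⌊(n:ℝ)*s⌋).toNat) : ℝ))/n) ω := by
      rcases Nat.eq_zero_or_pos (⌊(n:ℝ)*s⌋).toNat with h|h
      · rw [h]
        unfold gridF
        rw [dif_neg (by omega)]
        simp only [Nat.cast_zero, zero_div]
        exact hω.symm
      · unfold gridF
        rw [dif_pos ⟨h, by omega⟩]
        show W (((((⌊(n:ℝ)*s⌋).toNat - 1 : ℕ) : ℝ) + 1)/n) ω
          = W ((((⌊(n:ℝ)*s⌋).toNat : ℝ))/n) ω
        congr 1
        rw [Nat.cast_sub h]
        push_cast
        ring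
    have e2 : gridF n (fun k : Fin n => W (((k:ℕ)+1:ℝ)/n) ω) ((⌊(n:ℝ)*s⌋).toNat + 1)
        = W ((((((⌊(n:ℝ)*s⌋).toNat) : ℝ))+1)/n) ω := by
      unfold gridF
      rw [dif_pos ⟨by omega, by omega⟩]
      show W ((((((⌊(n:ℝ)*s⌋).toNat + 1 - 1 : ℕ)) : ℝ) + 1)/n) ω
        = W ((((⌊(n:ℝ)*s⌋).toNat : ℝ) + 1)/n) ω
      norm_num
    unfold Wlin linF
    rw [hfract_eq s, ← hcastR, e1, e2]
  -- the conditional expectation identification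
  have hgm : AEStronglyMeasurable[G]
      (fun ω => ∫ s in Set.Ioo (0:ℝ) 1, deriv f s * Wlin W n s ω) μ := by
    have hVG : Measurable[G] (fun ω => fun k : Fin n => W (((k:ℕ)+1:ℝ)/n) ω) :=
      measurable_iff_comap_le.mpr (le_of_eq hGdef.symm)
    refine ⟨fun ω => hF (deriv f) n (fun k : Fin n => W (((k:ℕ)+1:ℝ)/n) ω), ?_, ?_⟩
    · exact ((hF_measurable (deriv f) n (measurable_deriv f)).comp hVG).stronglyMeasurable
    · filter_upwards [hVgrid] with ω hω
      unfold hF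
      exact setIntegral_congr_fun measurableSet_Ioo fun s hs => by rw [hω s hs]
  have hsetEq : ∀ A : Set Ω, MeasurableSet[G] A → μ A < ⊤ →
      ∫ ω in A, (∫ s in Set.Ioo (0:ℝ) 1, deriv f s * Wlin W n s ω) ∂μ
        = ∫ ω in A, (∫ s in Set.Ioo (0:ℝ) 1, deriv f s * W s ω) ∂μ := by
    intro A hA _
    have hA' : MeasurableSet A := hG _ hA
    rw [← hswapWlin A, ← hswapW A]
    refine setIntegral_congr_fun measurableSet_Ioo fun s hs => ?_
    have hsIcc := hIoosub hs
    rw [integral_const_mul, integral_const_mul]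
    congr 1
    have h3 : ∫ ω in A, Wlin W n s ω ∂μ = ∫ ω in A, (μ[W s|G]) ω ∂μ :=
      setIntegral_congr_ae hA'
        (by filter_upwards [hcond s hsIcc] with ω hω _; exact hω.symm)
    rw [h3, setIntegral_condExp hG (hWint s hsIcc) hA]
  have hcondY : (fun ω => ∫ s in Set.Ioo (0:ℝ) 1, deriv f s * Wlin W n s ω)
      =ᵐ[μ] μ[(fun ω => ∫ s in Set.Ioo (0:ℝ) 1, deriv f s * W s ω)|G] :=
    ae_eq_condExp_of_forall_setIntegral_eq hG hYint
      (fun A _ _ => hgYint.integrableOn) hsetEq hgm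
  -- W 1 is G-measurable
  have hVG : Measurable[G] (fun ω => fun k : Fin n => W (((k:ℕ)+1:ℝ)/n) ω) :=
    measurable_iff_comap_le.mpr (le_of_eq hGdef.symm)
  have hW1eq : W 1 = fun ω => (fun k : Fin n => W (((k:ℕ)+1:ℝ)/n) ω) ⟨n-1, by omega⟩ := by
    funext ω
    show W 1 ω = W ((((n-1 : ℕ):ℝ)+1)/n) ω
    congr 1
    rw [Nat.cast_sub hn]
    field_simp
    ring
  have hW1G : Measurable[G] (W 1) := by
    rw [hW1eq]
    exact (measurable_pi_apply _).comp hVG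
  have hsmW1 : StronglyMeasurable[G] (fun ω => f 1 * W 1 ω) :=
    (hW1G.const_mul (f 1)).stronglyMeasurable
  have hintW1 : Integrable (fun ω => f 1 * W 1 ω) μ :=
    (hWint 1 ⟨zero_le_one, le_refl _⟩).const_mul _
  -- rewrite X
  have hXrw : (fun ω' => f 1 * W 1 ω' - ∫ s in (0:ℝ)..1, f' s * W s ω')
      = (fun ω' => f 1 * W 1 ω')
        - (fun ω' => ∫ s in Set.Ioo (0:ℝ) 1, deriv f s * W s ω') := by
    funext ω
    rw [Pi.sub_apply, hYdef ω]
  have hcondW1 : μ[(fun ω' => f 1 * W 1 ω')|G] = fun ω' => f 1 * W 1 ω' :=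
    condExp_of_stronglyMeasurable hG hsmW1 hintW1
  have hcondX : μ[fun ω' => f 1 * W 1 ω' - ∫ s in (0:ℝ)..1, f' s * W s ω'|G]
      =ᵐ[μ] (fun ω' => f 1 * W 1 ω')
        - (fun ω => ∫ s in Set.Ioo (0:ℝ) 1, deriv f s * Wlin W n s ω) := by
    rw [hXrw]
    refine (condExp_sub hintW1 hYint G).trans ?_
    refine Filter.EventuallyEq.sub ?_ hcondY.symm
    rw [hcondW1]
  -- final pointwise computation
  filter_upwards [hcondX] with ω hω
  rw [hω]
  simp only [Pi.sub_apply]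
  -- interval integrability for this ω
  obtain ⟨Cw, hCw⟩ := isCompact_Icc.exists_bound_of_continuousOn
    ((hcont ω).continuousOn : ContinuousOn (fun t => W t ω) (Set.Icc (0:ℝ) 2))
  have hCw0 : 0 ≤ Cw := le_trans (norm_nonneg _) (hCw 0 (by norm_num))
  have hIocIcc2 : ∀ s ∈ Set.Ioc (0:ℝ) 1, s ∈ Set.Icc (0:ℝ) 2 :=
    fun s hs => ⟨le_of_lt hs.1, le_trans hs.2 one_le_two⟩
  have hIocIcc : ∀ s ∈ Set.Ioc (0:ℝ) 1, s ∈ Set.Icc (0:ℝ) 1 :=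
    fun s hs => ⟨le_of_lt hs.1, hs.2⟩
  have hIW : IntervalIntegrable (fun s => f' s * W s ω) MeasureTheory.volume 0 1 := by
    rw [intervalIntegrable_iff_integrableOn_Ioc_of_le zero_le_one]
    have hm1 : Measurable fun s => deriv f s * W s ω :=
      (measurable_deriv f).mul (hWslice ω)
    have hmeas' : AEStronglyMeasurable (fun s => f' s * W s ω)
        (MeasureTheory.volume.restrict (Set.Ioc (0:ℝ) 1)) := by
      refine hm1.aestronglyMeasurable.congr ?_
      filter_upwards [ae_restrict_mem measurableSet_Ioc] with s hs
      rw [hderiv s (hIocIcc s hs)]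
    apply Integrable.mono' (integrable_const (C * Cw)) hmeas'
    filter_upwards [ae_restrict_mem measurableSet_Ioc] with s hs
    rw [Real.norm_eq_abs, abs_mul]
    have h1 : |f' s| ≤ C := by rw [← hderiv s (hIocIcc s hs)]; exact hC s (hIocIcc s hs)
    have h2 : |W s ω| ≤ Cw := by
      have := hCw s (hIocIcc2 s hs)
      rwa [Real.norm_eq_abs] at this
    exact mul_le_mul h1 h2 (abs_nonneg _) hC0
  have hWlinbd : ∀ s ∈ Set.Ioc (0:ℝ) 1, |Wlin W n s ω| ≤ 3 * Cw := by
    intro s hs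
    have h0 : (0:ℤ) ≤ ⌊(n:ℝ)*s⌋ := Int.floor_nonneg.mpr (by nlinarith [hs.1])
    have h1 : ⌊(n:ℝ)*s⌋ ≤ (n:ℤ) := by
      have : (n:ℝ)*s ≤ (n:ℝ) := by nlinarith [hs.2]
      calc ⌊(n:ℝ)*s⌋ ≤ ⌊(n:ℝ)⌋ := Int.floor_le_floor this
        _ = (n:ℤ) := by exact_mod_cast Int.floor_natCast n
    have h0' : (0:ℝ) ≤ (⌊(n:ℝ)*s⌋:ℝ) := by exact_mod_cast h0
    have h1' : (⌊(n:ℝ)*s⌋:ℝ) ≤ (n:ℝ) := by exact_mod_cast h1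
    have ha2 : (⌊(n:ℝ)*s⌋:ℝ)/n ∈ Set.Icc (0:ℝ) 2 := by
      constructor
      · positivity
      · rw [div_le_iff₀ hnpos]; nlinarith
    have hb2 : ((⌊(n:ℝ)*s⌋:ℝ)+1)/n ∈ Set.Icc (0:ℝ) 2 := by
      constructor
      · positivity
      · rw [div_le_iff₀ hnpos]
        have : (1:ℝ) ≤ n := by exact_mod_cast hn
        nlinarith
    have hA := hCw _ ha2
    have hB := hCw _ hb2
    rw [Real.norm_eq_abs] at hA hB
    have hc0 : 0 ≤ (n:ℝ) * (s - (⌊(n:ℝ)*s⌋:ℝ)/n) := by rw [hfract_eq]; exact hfract0 s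
    have hc1 : (n:ℝ) * (s - (⌊(n:ℝ)*s⌋:ℝ)/n) ≤ 1 := by rw [hfract_eq]; exact hfract1 s
    unfold Wlin
    set x := W ((⌊(n:ℝ)*s⌋:ℝ)/n) ω
    set y := W (((⌊(n:ℝ)*s⌋:ℝ)+1)/n) ω
    set c := (n:ℝ) * (s - (⌊(n:ℝ)*s⌋:ℝ)/n)
    have e1 : |x + c * (y - x)| ≤ |x| + |c * (y - x)| := abs_add_le _ _
    have e2 : |c * (y - x)| ≤ |y - x| := by
      rw [abs_mul, abs_of_nonneg hc0]
      exact mul_le_of_le_one_left (abs_nonneg _) hc1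
    have e3 : |y - x| ≤ |y| + |x| := abs_sub _ _
    have hx : |x| ≤ Cw := hA
    have hy : |y| ≤ Cw := hB
    linarith
  have hIWlin : IntervalIntegrable (fun s => f' s * Wlin W n s ω) MeasureTheory.volume 0 1 := by
    rw [intervalIntegrable_iff_integrableOn_Ioc_of_le zero_le_one]
    have hWlinSlice : Measurable fun s => Wlin W n s ω := by
      unfold Wlin
      exact (((hWslice ω).comp (hfloorR.div_const _))).add
        (((measurable_id.sub (hfloorR.div_const _)).const_mul _).mul
          (((hWslice ω).comp ((hfloorR.add_const 1).div_const _)).sub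
            ((hWslice ω).comp (hfloorR.div_const _))))
    have hm1 : Measurable fun s => deriv f s * Wlin W n s ω :=
      (measurable_deriv f).mul hWlinSlice
    have hmeas' : AEStronglyMeasurable (fun s => f' s * Wlin W n s ω)
        (MeasureTheory.volume.restrict (Set.Ioc (0:ℝ) 1)) := by
      refine hm1.aestronglyMeasurable.congr ?_
      filter_upwards [ae_restrict_mem measurableSet_Ioc] with s hs
      rw [hderiv s (hIocIcc s hs)]
    apply Integrable.mono' (integrable_const (C * (3 * Cw))) hmeas'
    filter_upwards [ae_restrict_mem measurableSet_Ioc] with s hs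
    rw [Real.norm_eq_abs, abs_mul]
    have h1 : |f' s| ≤ C := by rw [← hderiv s (hIocIcc s hs)]; exact hC s (hIocIcc s hs)
    exact mul_le_mul h1 (hWlinbd s hs) (abs_nonneg _) hC0
  have hsplit : (∫ s in (0:ℝ)..1, f' s * (W s ω - Wlin W n s ω))
      = (∫ s in (0:ℝ)..1, f' s * W s ω) - ∫ s in (0:ℝ)..1, f' s * Wlin W n s ω := by
    rw [← intervalIntegral.integral_sub hIW hIWlin]
    apply intervalIntegral.integral_congr
    intro s _
    ring
  rw [hsplit]
  have := hgYdef ω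
  linarith [this]
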